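/- Let W be a BI-DMC with P_0 = W(·|0) everywhere positive and P_1 = W(·|1). Fix q ≥ i ≥ 1, x_i ∈ {0,1}, and x_{i+1:q} ∈ {0,1}^{q−i}. Let X_1,…,X_{i−1} be i.i.d. uniform bits and let Ỹ ∈ 𝒴^{2^q} have law W̃(· | X_{1:i−1}, x_i, x_{i+1:q}) (output of the PPM super channel). Writing 𝒜^q(x_{i+1:q}) = {t_1 < t_2 < … < t_{2^i}}, the pmf of the restricted output (Y_{t_1},…,Y_{t_{2^i}}) equals W^i(·|x_i), the level-i equivalent channel: W^i(y_1,…,y_{2^i}|x_i) = 2^{−(i−1)} Σ_{j=2^{i−1}x_i+1}^{2^{i−1}(x_i+1)} P_0^{⊗2^i}(y_1,…,y_{2^i})·P_1(y_j)/P_0(y_j). In particular, the level-i channel does not depend on the total number of levels q nor on x_{i+1:q}. -/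

import Mathlib

open Finset

def IsPMF {𝒵 : Type} [Fintype 𝒵] (P : 𝒵 → ℝ) : Prop :=
  (∀ z, 0 ≤ P z) ∧ ∑ z, P z = 1

/-- Least-significant-bit-first binary-to-decimal map. -/
def dIdx (q : ℕ) (x : Fin q → Bool) : ℕ :=
  ∑ j : Fin q, if x j then 2^(j:ℕ) else 0

lemma sum_two_pow (q : ℕ) : ∑ j ∈ Finset.range q, 2^j = 2^q - 1 := by
  induction q with
  | zero => simp
  | succ q ih =>
    rw [Finset.sum_range_succ, ih, pow_succ]
    have : 0 < 2^q := pow_pos (by norm_num) q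
    omega

lemma dIdx_lt (q : ℕ) (x : Fin q → Bool) : dIdx q x < 2^q := by
  have h1 : dIdx q x ≤ ∑ j : Fin q, 2^(j:ℕ) := by
    apply Finset.sum_le_sum
    intro j _
    split <;> simp
  have h2 : ∑ j : Fin q, 2^(j:ℕ) = 2^q - 1 := by
    rw [Fin.sum_univ_eq_sum_range (fun j => 2^j) q, sum_two_pow]
  have : 0 < 2^q := pow_pos (by norm_num) q
  omega

/-- Position (0-indexed) of the `1` in the PPM symbol encoding `x`. -/
def ppmPos (q : ℕ) (x : Fin q → Bool) : Fin (2^q) := ⟨dIdx q x, dIdx_lt q x⟩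

/-- PPM super channel of the binary-input channel `W`:
`W̃(yt|x) = P1(y_{d(x)}) ∏_{h ≠ d(x)} P0(y_h)`. -/
noncomputable def superCh {𝒴 : Type} [Fintype 𝒴] [DecidableEq 𝒴] (W : Bool → 𝒴 → ℝ)
    (q : ℕ) (x : Fin q → Bool) (yt : Fin (2^q) → 𝒴) : ℝ :=
  W true (yt (ppmPos q x)) * ∏ h ∈ univ.erase (ppmPos q x), W false (yt h)

/-- Conditional output pmf of the PPM super channel given the inputs off `S`:
`P_{Ỹ|X_{S^c}}(yt|x_{S^c}) = 2^{−|S|} ∑_{x_S} W̃(yt|x)`. -/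
noncomputable def condOut {𝒴 : Type} [Fintype 𝒴] [DecidableEq 𝒴] (W : Bool → 𝒴 → ℝ)
    (q : ℕ) (S : Finset (Fin q)) (x : Fin q → Bool) (yt : Fin (2^q) → 𝒴) : ℝ :=
  ((2:ℝ)^S.card)⁻¹ * ∑ xs : {i : Fin q // i ∈ S} → Bool,
    superCh W q (fun i => if h : i ∈ S then xs ⟨i, h⟩ else x i) yt

/-- Information density expectation `∑_{x,yt} 2^{−q} W̃(yt|x) log( P(yt|x_{A^c}) / P(yt|x_{B^c}) )`
(natural logarithm); with `A = ∅` and `B = S` this is `I(X_S;Ỹ|X_{S^c})`. -/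
noncomputable def infoDen {𝒴 : Type} [Fintype 𝒴] [DecidableEq 𝒴] (W : Bool → 𝒴 → ℝ)
    (q : ℕ) (A B : Finset (Fin q)) : ℝ :=
  ∑ x : Fin q → Bool, ∑ yt : Fin (2^q) → 𝒴,
    ((2:ℝ)^q)⁻¹ * superCh W q x yt * Real.log (condOut W q A x yt / condOut W q B x yt)

/-- Same with logarithm base 2 (information measured in bits). -/
noncomputable def infoDen2 {𝒴 : Type} [Fintype 𝒴] [DecidableEq 𝒴] (W : Bool → 𝒴 → ℝ)
    (q : ℕ) (A B : Finset (Fin q)) : ℝ :=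
  ∑ x : Fin q → Bool, ∑ yt : Fin (2^q) → 𝒴,
    ((2:ℝ)^q)⁻¹ * superCh W q x yt * Real.logb 2 (condOut W q A x yt / condOut W q B x yt)

/-- Indicator of a proposition. -/
noncomputable def ind (P : Prop) : ℝ := @ite ℝ P (Classical.propDecidable P) 1 0

lemma two_pow_pos' (q : ℕ) : 0 < 2^q := pow_pos (by norm_num) q

/-- The level-`i` equivalent channel (paper indexing, `i ≥ 1`): a channel from one bit
to `𝒴^{2^i}` given by
`W^i(y|x) = 2^{−(i−1)} ∑_{j=2^{i−1}x}^{2^{i−1}(x+1)−1} P0^{⊗2^i}(y) P1(y_j)/P0(y_j)`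
(positions `j` are 0-indexed). -/
noncomputable def equivCh {𝒴 : Type} [Fintype 𝒴] (P0 P1 : 𝒴 → ℝ) (i : ℕ)
    (y : Fin (2^i) → 𝒴) (x : Bool) : ℝ :=
  ((2:ℝ)^(i-1))⁻¹ * ∑ j : Fin (2^i),
    if 2^(i-1) * (cond x 1 0) ≤ (j:ℕ) ∧ (j:ℕ) < 2^(i-1) * (cond x 1 0 + 1)
    then (∏ h, P0 (y h)) * (P1 (y j) / P0 (y j)) else 0

/-!
The PPM symbol of an input `x` is a product pmf on `𝒴^{2^q}`: `P_1` at the pulse position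
`d(x)` and `P_0` everywhere else. If the bits above `i` are fixed to `x_{i+1:q}`, then
`d(x) = d(x_{i+1:q}) + 2^{i-1} x_i + d(x_{1:i-1})` lies in the window
`𝒜^q(x_{i+1:q}) = d(x_{i+1:q}) + [0, 2^i)`, and summing out the coordinates outside the window
(each a copy of `P_0`) leaves the length-`2^i` PPM pmf with its pulse at
`2^{i-1} x_i + d(x_{1:i-1})`. As `x_{1:i-1}` runs over `{0,1}^{i-1}`, `d(x_{1:i-1})` runs over
`[0, 2^{i-1})` exactly once, so the average is `W^i(·|x_i)`.
-/

lemma ind_eq_ite (P : Prop) [Decidable P] : ind P = if P then 1 else 0 := by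
  unfold ind
  congr

lemma ind_pos {P : Prop} (h : P) : ind P = 1 := by
  simp [ind, h]

lemma ind_forall {α : Type*} [Fintype α] (P : α → Prop) :
    ind (∀ a, P a) = ∏ a, ind (P a) := by
  classical
  simp only [ind_eq_ite, prod_ite_zero, prod_const_one, mem_univ, true_implies]

section Marginal

variable {ι κ 𝒴 : Type*} [Fintype ι] [Fintype κ] [Fintype 𝒴] [DecidableEq ι]

lemma sum_ind_comp_mul_prod (σ : κ → ι) (hσ : Function.Injective σ) (f : ι → 𝒴 → ℝ)
    (hf : ∀ h ∉ Set.range σ, ∑ z, f h z = 1) (w : κ → 𝒴) :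
    ∑ y : ι → 𝒴, ind (∀ r, y (σ r) = w r) * ∏ h, f h (y h) = ∏ r, f (σ r) (w r) := by
  have hind : ∀ y : ι → 𝒴,
      ind (∀ r, y (σ r) = w r) = ∏ h, ind (∀ r, σ r = h → y h = w r) := by
    intro y
    rw [← ind_forall]
    congr 1
    exact propext ⟨fun hy h r hr => hr ▸ hy r, fun hy r => hy _ r rfl⟩
  simp_rw [hind, ← prod_mul_distrib]
  rw [← Fintype.prod_sum (fun h z => ind (∀ r, σ r = h → z = w r) * f h z)]
  refine (Fintype.prod_of_injective σ hσ _ _ (fun h hh => ?_) (fun r => ?_)).symm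
  · have hvac : ∀ z : 𝒴, (∀ r, σ r = h → z = w r) := fun z r hr => absurd ⟨r, hr⟩ hh
    rw [← hf h hh]
    exact sum_congr rfl fun z _ => by rw [ind_pos (hvac z), one_mul]
  · classical
    simp only [hσ.eq_iff, forall_eq, ind_eq_ite, ite_mul, one_mul, zero_mul,
      sum_ite_eq', mem_univ, if_true]

def pulseProd (P0 P1 : 𝒴 → ℝ) (j : ι) (y : ι → 𝒴) : ℝ :=
  P1 (y j) * ∏ h ∈ univ.erase j, P0 (y h)

omit [Fintype 𝒴] in
lemma pulseProd_eq_prod (P0 P1 : 𝒴 → ℝ) (j : ι) (y : ι → 𝒴) :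
    pulseProd P0 P1 j y = ∏ h, (if h = j then P1 else P0) (y h) := by
  rw [pulseProd, ← mul_prod_erase univ _ (mem_univ j), if_pos rfl]
  congr 1
  exact prod_congr rfl fun h hh => by rw [if_neg (ne_of_mem_erase hh)]

lemma sum_ind_comp_mul_pulseProd [DecidableEq κ] {P0 : 𝒴 → ℝ} (hP0 : ∑ z, P0 z = 1)
    (P1 : 𝒴 → ℝ) (σ : κ → ι) (hσ : Function.Injective σ) (j : κ) (w : κ → 𝒴) :
    ∑ y : ι → 𝒴, ind (∀ r, y (σ r) = w r) * pulseProd P0 P1 (σ j) y = pulseProd P0 P1 j w := by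
  simp_rw [pulseProd_eq_prod]
  rw [sum_ind_comp_mul_prod σ hσ]
  · simp only [hσ.eq_iff]
  · rintro h hh
    rw [if_neg fun hj => hh ⟨j, hj.symm⟩]
    exact hP0

end Marginal

lemma two_pow_pred_mul_cond_add_lt {i : ℕ} (hi : 1 ≤ i) (x : Bool) {m : ℕ} (hm : m < 2 ^ (i - 1)) :
    2 ^ (i - 1) * cond x 1 0 + m < 2 ^ i := by
  obtain ⟨k, rfl⟩ : ∃ k, i = k + 1 := ⟨i - 1, by omega⟩
  cases x <;> simp [pow_succ] at hm ⊢ <;> omega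

def halfIdx (i : ℕ) (hi : 1 ≤ i) (x : Bool) (m : Fin (2 ^ (i - 1))) : Fin (2 ^ i) :=
  ⟨2 ^ (i - 1) * cond x 1 0 + m, two_pow_pred_mul_cond_add_lt hi x m.2⟩

lemma halfIdx_surjective {i : ℕ} (hi : 1 ≤ i) (r : Fin (2 ^ i)) :
    ∃ x m, halfIdx i hi x m = r := by
  obtain ⟨k, rfl⟩ : ∃ k, i = k + 1 := ⟨i - 1, by omega⟩
  have hr : (r : ℕ) < 2 ^ k * 2 := by simpa [pow_succ] using r.2
  by_cases hlow : (r : ℕ) < 2 ^ k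
  · exact ⟨false, ⟨r, by simpa using hlow⟩, Fin.ext (by simp [halfIdx])⟩
  · exact ⟨true, ⟨r - 2 ^ k, by simp; omega⟩, Fin.ext (by simp [halfIdx]; omega)⟩

def lowBitsEquiv (q k : ℕ) (h : k ≤ q) : ({t : Fin q // (t : ℕ) < k} → Bool) ≃ Fin (2 ^ k) :=
  (Equiv.arrowCongr (Fin.castLEquiv h).symm finTwoEquiv.symm).trans finFunctionFinEquiv

lemma lowBitsEquiv_val (q k : ℕ) (h : k ≤ q) (x : {t : Fin q // (t : ℕ) < k} → Bool) :
    (lowBitsEquiv q k h x : ℕ)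
      = ∑ t : Fin q, if ht : (t : ℕ) < k then (if x ⟨t, ht⟩ then 2 ^ (t : ℕ) else 0) else 0 := by
  rw [lowBitsEquiv, Equiv.trans_apply, finFunctionFinEquiv_apply]
  refine Fintype.sum_of_injective (Fin.castLE h) (Fin.castLE_injective h) _ _
    (fun t ht => dif_neg fun hk => ht ⟨⟨t, hk⟩, rfl⟩) (fun s => ?_)
  cases hs : x ⟨Fin.castLE h s, s.2⟩ <;> simp [finTwoEquiv, Fin.castLEquiv, hs]

def highVal (q i : ℕ) (xtail : {t : Fin q // i ≤ (t : ℕ)} → Bool) : ℕ :=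
  ∑ t : Fin q, if h : i ≤ (t : ℕ) then (if xtail ⟨t, h⟩ then 2 ^ (t : ℕ) else 0) else 0

def concatBits (q i : ℕ) (xhead : {t : Fin q // (t : ℕ) < i - 1} → Bool) (xi : Bool)
    (xtail : {t : Fin q // i ≤ (t : ℕ)} → Bool) : Fin q → Bool :=
  fun t => if h1 : (t : ℕ) < i - 1 then xhead ⟨t, h1⟩
    else if h2 : i ≤ (t : ℕ) then xtail ⟨t, h2⟩ else xi

/-- The `r`-th element of `𝒜^q(x_{i+1:q})`; the reduction mod `2^q` only makes the
definition total and is the identity when `i ≤ q` (`windowPos_val`). -/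
def windowPos (q i : ℕ) (xtail : {t : Fin q // i ≤ (t : ℕ)} → Bool) (r : Fin (2 ^ i)) :
    Fin (2 ^ q) :=
  ⟨(highVal q i xtail + r) % 2 ^ q, Nat.mod_lt _ (two_pow_pos' q)⟩

section Window

variable {q i : ℕ} (hi : 1 ≤ i) (hiq : i ≤ q)
include hi hiq

lemma dIdx_concatBits (xhead : {t : Fin q // (t : ℕ) < i - 1} → Bool) (xi : Bool)
    (xtail : {t : Fin q // i ≤ (t : ℕ)} → Bool) :
    dIdx q (concatBits q i xhead xi xtail) = highVal q i xtail
      + halfIdx i hi xi (lowBitsEquiv q (i - 1) ((Nat.sub_le i 1).trans hiq) xhead) := by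
  have hsplit : ∀ t : Fin q, (if concatBits q i xhead xi xtail t then 2 ^ (t : ℕ) else 0)
      = (if h : i ≤ (t : ℕ) then (if xtail ⟨t, h⟩ then 2 ^ (t : ℕ) else 0) else 0)
        + ((if t = ⟨i - 1, by omega⟩ then 2 ^ (i - 1) * cond xi 1 0 else 0)
        + (if h : (t : ℕ) < i - 1 then (if xhead ⟨t, h⟩ then 2 ^ (t : ℕ) else 0) else 0)) := by
    intro t
    simp only [concatBits, Fin.ext_iff]
    split_ifs <;> first | omega | simp_all
  rw [dIdx, sum_congr rfl fun t _ => hsplit t, sum_add_distrib, sum_add_distrib,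
    sum_ite_eq' univ, if_pos (mem_univ _)]
  simp only [halfIdx, lowBitsEquiv_val, highVal]

/-- `highVal + r` is the pulse position `d(x)` of some input with tail `xtail`. -/
lemma highVal_add_lt (xtail : {t : Fin q // i ≤ (t : ℕ)} → Bool) (r : Fin (2 ^ i)) :
    highVal q i xtail + r < 2 ^ q := by
  obtain ⟨xi, m, rfl⟩ := halfIdx_surjective hi r
  obtain ⟨xhead, rfl⟩ := (lowBitsEquiv q (i - 1) ((Nat.sub_le i 1).trans hiq)).surjective m
  rw [← dIdx_concatBits hi hiq xhead xi xtail]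
  exact dIdx_lt q _

lemma windowPos_val (xtail : {t : Fin q // i ≤ (t : ℕ)} → Bool) (r : Fin (2 ^ i)) :
    (windowPos q i xtail r : ℕ) = highVal q i xtail + r :=
  Nat.mod_eq_of_lt (highVal_add_lt hi hiq xtail r)

lemma windowPos_injective (xtail : {t : Fin q // i ≤ (t : ℕ)} → Bool) :
    Function.Injective (windowPos q i xtail) := fun a b hab => by
  have hval := congrArg Fin.val hab
  rw [windowPos_val hi hiq, windowPos_val hi hiq] at hval
  exact Fin.ext (by omega)

lemma ppmPos_concatBits (xhead : {t : Fin q // (t : ℕ) < i - 1} → Bool) (xi : Bool)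
    (xtail : {t : Fin q // i ≤ (t : ℕ)} → Bool) :
    ppmPos q (concatBits q i xhead xi xtail) = windowPos q i xtail
      (halfIdx i hi xi (lowBitsEquiv q (i - 1) ((Nat.sub_le i 1).trans hiq) xhead)) :=
  Fin.ext ((dIdx_concatBits hi hiq xhead xi xtail).trans (windowPos_val hi hiq xtail _).symm)

end Window

lemma superCh_eq_pulseProd {𝒴 : Type} [Fintype 𝒴] [DecidableEq 𝒴] (W : Bool → 𝒴 → ℝ)
    (q : ℕ) (x : Fin q → Bool) (yt : Fin (2 ^ q) → 𝒴) :
    superCh W q x yt = pulseProd (W false) (W true) (ppmPos q x) yt :=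
  rfl

lemma equivCh_eq_sum_pulseProd {𝒴 : Type} [Fintype 𝒴] {P0 : 𝒴 → ℝ} (hP0 : ∀ z, P0 z ≠ 0)
    (P1 : 𝒴 → ℝ) {i : ℕ} (hi : 1 ≤ i) (y : Fin (2 ^ i) → 𝒴) (x : Bool) :
    equivCh P0 P1 i y x = ((2 : ℝ) ^ (i - 1))⁻¹ * ∑ m, pulseProd P0 P1 (halfIdx i hi x m) y := by
  have hterm : ∀ j, (∏ h, P0 (y h)) * (P1 (y j) / P0 (y j)) = pulseProd P0 P1 j y := by
    intro j
    rw [pulseProd, ← mul_prod_erase univ _ (mem_univ j)]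
    field_simp [hP0 (y j)]
  rw [equivCh, ← sum_filter]
  congr 1
  refine (sum_nbij (halfIdx i hi x) (fun m _ => ?_) (fun a _ b _ hab => ?_) (fun j hj => ?_)
    (fun m _ => (hterm _).symm)).symm
  · simp only [mem_filter, mem_univ, true_and, halfIdx, mul_add, mul_one]
    omega
  · have hval := congrArg Fin.val hab
    simp only [halfIdx] at hval
    exact Fin.ext (by omega)
  · simp only [coe_filter, mem_univ, true_and, Set.mem_ofPred_eq, mul_add, mul_one] at hj
    refine ⟨⟨j - 2 ^ (i - 1) * cond x 1 0, by omega⟩, mem_coe.2 (mem_univ _), Fin.ext ?_⟩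
    simp only [halfIdx]
    omega

/-- The channel seen at level `i` of MLC-PPM (paper indexing, `1 ≤ i ≤ q`): with
`x_i` fixed, the tail bits `x_{i+1:q}` fixed and the bits `x_{1:i−1}` i.i.d. uniform,
the pmf of the output of the PPM super channel restricted to the positions
`𝒜^q(x_{i+1:q}) = {base, base+1, …, base+2^i−1}` (in increasing order) equals the
level-`i` equivalent channel `W^i(·|x_i)`; in particular it depends neither on the
total number of levels `q` nor on `x_{i+1:q}`. -/
theorem stmt14 {𝒴 : Type} [Fintype 𝒴] [DecidableEq 𝒴]
    (W : Bool → 𝒴 → ℝ) (hW : ∀ x, IsPMF (W x)) (hpos : ∀ y, 0 < W false y)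
    (q i : ℕ) (hi : 1 ≤ i) (hiq : i ≤ q)
    (xi : Bool) (xtail : {t : Fin q // i ≤ (t:ℕ)} → Bool) :
    ∀ w : Fin (2^i) → 𝒴,
      (∑ xhead : {t : Fin q // (t:ℕ) < i - 1} → Bool, ((2:ℝ)^(i-1))⁻¹ *
        ∑ yt : Fin (2^q) → 𝒴,
          ind (∀ r : Fin (2^i),
            yt ⟨((∑ t : Fin q, if h : i ≤ (t:ℕ) then
                    (if xtail ⟨t, h⟩ then 2^(t:ℕ) else 0) else 0) + (r:ℕ)) % 2^q,
                 Nat.mod_lt _ (two_pow_pos' q)⟩ = w r) *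
          superCh W q
            (fun t => if h1 : (t:ℕ) < i - 1 then xhead ⟨t, h1⟩
                      else if h2 : i ≤ (t:ℕ) then xtail ⟨t, h2⟩ else xi)
            yt)
      = equivCh (W false) (W true) i w xi := by
  intro w
  have hk : i - 1 ≤ q := (Nat.sub_le i 1).trans hiq
  have hmarginal : ∀ xhead, ∑ yt, ind (∀ r, yt (windowPos q i xtail r) = w r)
        * superCh W q (concatBits q i xhead xi xtail) yt
      = pulseProd (W false) (W true) (halfIdx i hi xi (lowBitsEquiv q (i - 1) hk xhead)) w := by
    intro xhead
    simp only [superCh_eq_pulseProd, ppmPos_concatBits hi hiq]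
    exact sum_ind_comp_mul_pulseProd (hW false).2 _ _ (windowPos_injective hi hiq xtail) _ w
  -- the summands of the goal are those of `hmarginal` with `windowPos` and `concatBits` unfolded
  calc _ = ((2 : ℝ) ^ (i - 1))⁻¹ * ∑ xhead,
        pulseProd (W false) (W true) (halfIdx i hi xi (lowBitsEquiv q (i - 1) hk xhead)) w := by
        rw [mul_sum]
        exact sum_congr rfl fun xhead _ => congrArg (((2 : ℝ) ^ (i - 1))⁻¹ * ·) (hmarginal xhead)
    _ = ((2 : ℝ) ^ (i - 1))⁻¹ * ∑ m, pulseProd (W false) (W true) (halfIdx i hi xi m) w := by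
        rw [(lowBitsEquiv q (i - 1) hk).sum_comp
          (fun m => pulseProd (W false) (W true) (halfIdx i hi xi m) w)]
    _ = equivCh (W false) (W true) i w xi :=
        (equivCh_eq_sum_pulseProd (fun y => (hpos y).ne') _ hi w xi).symm
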